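/- Let X and Y be A-bounded operators on H admitting A-adjoints Xs and Ys (i.e. A∘Xs = X*∘A and A∘Ys = Y*∘A). Then w_𝔸([[0,X],[Y,0]])² ≤ (1/4)·max{‖Xs∘X + Y∘Ys‖_A, ‖X∘Xs + Ys∘Y‖_A} + (1/2)·max{w_A(X∘Y), w_A(Y∘X)}. -/

import Mathlib

noncomputable def sInner {E : Type*} [NormedAddCommGroup E] [InnerProductSpace ℂ E]
    (A : E →L[ℂ] E) (x y : E) : ℂ := inner ℂ (A x) y

noncomputable def sNorm {E : Type*} [NormedAddCommGroup E] [InnerProductSpace ℂ E]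
    (A : E →L[ℂ] E) (x : E) : ℝ := Real.sqrt (sInner A x x).re

/-- The `A`-operator seminorm. -/
noncomputable def opSNorm {E : Type*} [NormedAddCommGroup E] [InnerProductSpace ℂ E]
    (A T : E →L[ℂ] E) : ℝ := sSup {c | ∃ x : E, sNorm A x = 1 ∧ c = sNorm A (T x)}

/-- The `A`-numerical radius. -/
noncomputable def numRad {E : Type*} [NormedAddCommGroup E] [InnerProductSpace ℂ E]
    (A T : E →L[ℂ] E) : ℝ := sSup {c | ∃ x : E, sNorm A x = 1 ∧ c = ‖sInner A (T x) x‖}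

/-- `T` is `A`-bounded. -/
def ABounded {E : Type*} [NormedAddCommGroup E] [InnerProductSpace ℂ E]
    (A T : E →L[ℂ] E) : Prop := ∃ c > 0, ∀ x : E, sNorm A (T x) ≤ c * sNorm A x

/-- The 2×2 block operator `[[T, X], [Y, S]]` on `H ⊕ H` (with the ℓ² product structure). -/
noncomputable def blk {H : Type*} [NormedAddCommGroup H] [InnerProductSpace ℂ H]
    (T X Y S : H →L[ℂ] H) : WithLp 2 (H × H) →L[ℂ] WithLp 2 (H × H) :=
  ((WithLp.prodContinuousLinearEquiv 2 ℂ H H).symm.toContinuousLinearMap.comp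
    (((T.coprod X).prod (Y.coprod S)).comp
      (WithLp.prodContinuousLinearEquiv 2 ℂ H H).toContinuousLinearMap))

/-- The diagonal operator `𝔸 = diag(A, A)` on `H ⊕ H`. -/
noncomputable def twoA {H : Type*} [NormedAddCommGroup H] [InnerProductSpace ℂ H]
    (A : H →L[ℂ] H) : WithLp 2 (H × H) →L[ℂ] WithLp 2 (H × H) := blk A 0 0 A

/-! With `𝕋 = [[0, X], [Y, 0]]` and `𝕊 = [[0, Ys], [Xs, 0]]`, `𝕊` is an `𝔸`-adjoint of `𝕋`.
For a positive `B` and a `B`-adjoint `S` of `T`, one has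
`⟨Tz, z⟩_B = ⟪√B Tz, √B z⟫ = ⟪√B z, √B Sz⟫`, so Buzano's inequality and AM–GM give
`w_B(T)² ≤ ¼ ‖ST + TS‖_B + ½ w_B(T²)`. For `𝕋, 𝕊` both `𝕊𝕋 + 𝕋𝕊` and `𝕋²` are block diagonal,
with diagonal entries `X Xs + Ys Y, Xs X + Y Ys` and `X Y, Y X`, and the `𝔸`-seminorm and
`𝔸`-numerical radius of a block diagonal operator are at most the maxima over its entries. -/
open ContinuousLinearMap
open scoped InnerProductSpace ComplexConjugate

theorem norm_inner_mul_inner_le_of_norm_eq_one {𝕜 F : Type*} [RCLike 𝕜] [NormedAddCommGroup F]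
    [InnerProductSpace 𝕜 F] {e : F} (he : ‖e‖ = 1) (u v : F) :
    ‖⟪u, e⟫_𝕜 * ⟪e, v⟫_𝕜‖ ≤ (‖u‖ * ‖v‖ + ‖⟪u, v⟫_𝕜‖) / 2 := by
  -- `w` is the reflection of `u` in the line through `e`, so `‖w‖ = ‖u‖`.
  set w := (𝕜 ∙ e).reflection u
  have hw : ⟪w, v⟫_𝕜 + ⟪u, v⟫_𝕜 = 2 * (⟪u, e⟫_𝕜 * ⟪e, v⟫_𝕜) := by
    simp only [w, Submodule.reflection_apply, Submodule.starProjection_unit_singleton 𝕜 he,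
      inner_sub_left, two_smul, inner_add_left, inner_smul_left, inner_conj_symm]
    ring
  have h2 : ‖(2 : 𝕜) * (⟪u, e⟫_𝕜 * ⟪e, v⟫_𝕜)‖ ≤ ‖u‖ * ‖v‖ + ‖⟪u, v⟫_𝕜‖ :=
    calc ‖(2 : 𝕜) * (⟪u, e⟫_𝕜 * ⟪e, v⟫_𝕜)‖ = ‖⟪w, v⟫_𝕜 + ⟪u, v⟫_𝕜‖ := by rw [hw]
      _ ≤ ‖w‖ * ‖v‖ + ‖⟪u, v⟫_𝕜‖ := by
        grw [norm_add_le, norm_inner_le_norm]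
      _ = ‖u‖ * ‖v‖ + ‖⟪u, v⟫_𝕜‖ := by rw [LinearIsometryEquiv.norm_map]
  rw [norm_mul, RCLike.norm_ofNat] at h2
  linarith

section SemiInnerProduct

variable {E : Type*} [NormedAddCommGroup E] [InnerProductSpace ℂ E] {A T S : E →L[ℂ] E}

lemma sInner_add_left (A : E →L[ℂ] E) (x y z : E) :
    sInner A (x + y) z = sInner A x z + sInner A y z := by
  simp only [sInner, map_add, inner_add_left]

lemma sNorm_nonneg (A : E →L[ℂ] E) (x : E) : 0 ≤ sNorm A x := Real.sqrt_nonneg _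

lemma sNorm_smul (A : E →L[ℂ] E) (c : ℂ) (x : E) : sNorm A (c • x) = ‖c‖ * sNorm A x := by
  rw [sNorm, sNorm, sInner, map_smul, inner_smul_left, inner_smul_right, ← mul_assoc,
    Complex.conj_mul', ← Complex.ofReal_pow, Complex.re_ofReal_mul,
    Real.sqrt_mul (sq_nonneg _), Real.sqrt_sq (norm_nonneg _)]
  rfl

lemma opSNorm_nonneg (A T : E →L[ℂ] E) : 0 ≤ opSNorm A T :=
  Real.sSup_nonneg fun _ ⟨_, _, hc⟩ => hc ▸ sNorm_nonneg _ _

lemma numRad_nonneg (A T : E →L[ℂ] E) : 0 ≤ numRad A T :=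
  Real.sSup_nonneg fun _ ⟨_, _, hc⟩ => hc ▸ norm_nonneg _

-- `C` only serves to make the supremum finite: `sSup` of a set unbounded above is `0`.
lemma le_sSup_mul_sNorm_pow {φ : E → ℝ} {n : ℕ} (hn : n ≠ 0)
    (hφ : ∀ (c : ℂ) x, φ (c • x) = ‖c‖ ^ n * φ x) {C : ℝ} (hC : ∀ x, φ x ≤ C * sNorm A x ^ n)
    (x : E) : φ x ≤ sSup {c | ∃ x, sNorm A x = 1 ∧ c = φ x} * sNorm A x ^ n := by
  rcases (sNorm_nonneg A x).eq_or_lt with h0 | hpos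
  · simpa [← h0, zero_pow hn] using hC x
  set t := sNorm A x
  have hunit : sNorm A ((t⁻¹ : ℂ) • x) = 1 := by
    rw [sNorm_smul, norm_inv, Complex.norm_real, Real.norm_of_nonneg hpos.le,
      inv_mul_cancel₀ hpos.ne']
  have hbdd : BddAbove {c | ∃ x, sNorm A x = 1 ∧ c = φ x} :=
    ⟨C, fun _ ⟨y, hy, hc⟩ => hc ▸ by simpa [hy] using hC y⟩
  have hle := le_csSup hbdd ⟨_, hunit, rfl⟩
  rw [hφ, norm_inv, Complex.norm_real, Real.norm_of_nonneg hpos.le] at hle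
  calc φ x = t ^ n * (t⁻¹ ^ n * φ x) := by
        rw [inv_pow, ← mul_assoc, mul_inv_cancel₀ (pow_pos hpos n).ne', one_mul]
    _ ≤ _ := by rw [mul_comm]; gcongr

lemma ABounded.sNorm_apply_le (hT : ABounded A T) (x : E) :
    sNorm A (T x) ≤ opSNorm A T * sNorm A x := by
  obtain ⟨C, -, hC⟩ := hT
  have h := le_sSup_mul_sNorm_pow (φ := fun x => sNorm A (T x)) one_ne_zero
    (fun c x => by rw [map_smul, sNorm_smul, pow_one]) (C := C)
    (fun x => by rw [pow_one]; exact hC x) x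
  rwa [pow_one] at h

lemma ABounded.comp (hT : ABounded A T) (hS : ABounded A S) : ABounded A (T ∘L S) := by
  obtain ⟨c, hc, hTc⟩ := hT
  obtain ⟨d, hd, hSd⟩ := hS
  refine ⟨c * d, mul_pos hc hd, fun x => ?_⟩
  calc sNorm A (T (S x)) ≤ c * sNorm A (S x) := hTc _
    _ ≤ c * (d * sNorm A x) := by gcongr; exact hSd x
    _ = c * d * sNorm A x := by ring

-- The paper's relation `A ∘L S = T† ∘L A`, read through the semi-inner product
-- (see `isAAdjoint_of_comp_eq_adjoint_comp`).
def IsAAdjoint (A T S : E →L[ℂ] E) : Prop :=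
  ∀ x y, sInner A (S x) y = sInner A x (T y)

variable [CompleteSpace E]

lemma isAAdjoint_of_comp_eq_adjoint_comp (h : A ∘L S = adjoint T ∘L A) : IsAAdjoint A T S :=
  fun x y => by rw [sInner, sInner, ← comp_apply, h, comp_apply, adjoint_inner_left]

lemma sInner_eq_inner_sqrt (hA : A.IsPositive) (x y : E) :
    sInner A x y = ⟪CFC.sqrt A x, CFC.sqrt A y⟫_ℂ := by
  have hA₀ : 0 ≤ A := (nonneg_iff_isPositive A).mpr hA
  have hsa : IsSelfAdjoint (CFC.sqrt A) := .of_nonneg (CFC.sqrt_nonneg A)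
  have hAx : A x = CFC.sqrt A (CFC.sqrt A x) :=
    DFunLike.congr_fun (CFC.sqrt_mul_sqrt_self A hA₀).symm x
  rw [sInner, hAx, ← adjoint_inner_left, hsa.adjoint_eq]

lemma sNorm_eq_norm_sqrt (hA : A.IsPositive) (x : E) : sNorm A x = ‖CFC.sqrt A x‖ := by
  rw [sNorm, sInner_eq_inner_sqrt hA, norm_eq_sqrt_re_inner (𝕜 := ℂ)]
  rfl

lemma sNorm_sq (hA : A.IsPositive) (x : E) : sNorm A x ^ 2 = (sInner A x x).re := by
  rw [sNorm_eq_norm_sqrt hA, sInner_eq_inner_sqrt hA, ← inner_self_eq_norm_sq (𝕜 := ℂ)]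
  rfl

lemma norm_sInner_le (hA : A.IsPositive) (x y : E) : ‖sInner A x y‖ ≤ sNorm A x * sNorm A y := by
  rw [sInner_eq_inner_sqrt hA, sNorm_eq_norm_sqrt hA, sNorm_eq_norm_sqrt hA]
  exact norm_inner_le_norm _ _

lemma conj_sInner (hA : A.IsPositive) (x y : E) : conj (sInner A x y) = sInner A y x := by
  rw [sInner_eq_inner_sqrt hA, sInner_eq_inner_sqrt hA, inner_conj_symm]

lemma sNorm_add_le (hA : A.IsPositive) (x y : E) : sNorm A (x + y) ≤ sNorm A x + sNorm A y := by
  simpa only [sNorm_eq_norm_sqrt hA, map_add] using norm_add_le _ _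

lemma ABounded.add (hA : A.IsPositive) (hT : ABounded A T) (hS : ABounded A S) :
    ABounded A (T + S) := by
  obtain ⟨c, hc, hTc⟩ := hT
  obtain ⟨d, hd, hSd⟩ := hS
  refine ⟨c + d, add_pos hc hd, fun x => ?_⟩
  calc sNorm A (T x + S x) ≤ sNorm A (T x) + sNorm A (S x) := sNorm_add_le hA _ _
    _ ≤ c * sNorm A x + d * sNorm A x := add_le_add (hTc x) (hSd x)
    _ = (c + d) * sNorm A x := by ring

lemma ABounded.re_sInner_apply_le (hA : A.IsPositive) (hT : ABounded A T) (x : E) :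
    (sInner A (T x) x).re ≤ opSNorm A T * sNorm A x ^ 2 :=
  calc (sInner A (T x) x).re ≤ sNorm A (T x) * sNorm A x :=
        (Complex.re_le_norm _).trans (norm_sInner_le hA _ _)
    _ ≤ opSNorm A T * sNorm A x * sNorm A x := by
        gcongr; exacts [sNorm_nonneg A x, hT.sNorm_apply_le x]
    _ = opSNorm A T * sNorm A x ^ 2 := by ring

lemma ABounded.norm_sInner_apply_le (hA : A.IsPositive) (hT : ABounded A T) (x : E) :
    ‖sInner A (T x) x‖ ≤ numRad A T * sNorm A x ^ 2 := by
  obtain ⟨C, -, hC⟩ := hT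
  refine le_sSup_mul_sNorm_pow (φ := fun x => ‖sInner A (T x) x‖) two_ne_zero (fun c x => ?_)
    (C := C) (fun x => ?_) x
  · simp only [map_smul, sInner, inner_smul_left, inner_smul_right, norm_mul,
      Complex.norm_conj]
    ring
  · calc ‖sInner A (T x) x‖ ≤ sNorm A (T x) * sNorm A x := norm_sInner_le hA _ _
      _ ≤ C * sNorm A x * sNorm A x := by gcongr; exacts [sNorm_nonneg A x, hC x]
      _ = C * sNorm A x ^ 2 := by ring

lemma IsAAdjoint.sInner_apply_right (hA : A.IsPositive) (h : IsAAdjoint A T S) (x y : E) :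
    sInner A (T x) y = sInner A x (S y) := by
  rw [← conj_sInner hA, ← h, conj_sInner hA]

lemma ABounded.of_isAAdjoint (hA : A.IsPositive) (hT : ABounded A T) (h : IsAAdjoint A T S) :
    ABounded A S := by
  obtain ⟨c, hc, hTc⟩ := hT
  refine ⟨c, hc, fun x => ?_⟩
  have key : sNorm A (S x) ^ 2 ≤ sNorm A (S x) * (c * sNorm A x) :=
    calc sNorm A (S x) ^ 2 = (sInner A x (T (S x))).re := by rw [sNorm_sq hA, h]
      _ ≤ sNorm A x * sNorm A (T (S x)) := (Complex.re_le_norm _).trans (norm_sInner_le hA _ _)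
      _ ≤ sNorm A x * (c * sNorm A (S x)) := by gcongr; exacts [sNorm_nonneg A x, hTc _]
      _ = sNorm A (S x) * (c * sNorm A x) := by ring
  nlinarith [sNorm_nonneg A (S x), mul_nonneg hc.le (sNorm_nonneg A x)]

-- Buzano's inequality applied to `e = √A z`, `u = √A (T z)`, `v = √A (S z)`.
lemma norm_sInner_apply_sq_le (hA : A.IsPositive) (h : IsAAdjoint A T S) {z : E}
    (hz : sNorm A z = 1) :
    ‖sInner A (T z) z‖ ^ 2 ≤
      1 / 4 * (sInner A ((S ∘L T + T ∘L S) z) z).re + 1 / 2 * ‖sInner A ((T ∘L T) z) z‖ := by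
  set g := CFC.sqrt A
  have he : ‖g z‖ = 1 := by rwa [← sNorm_eq_norm_sqrt hA]
  have hue : ⟪g (T z), g z⟫_ℂ = sInner A (T z) z := (sInner_eq_inner_sqrt hA _ _).symm
  have hev : ⟪g z, g (S z)⟫_ℂ = sInner A (T z) z := by
    rw [h.sInner_apply_right hA, sInner_eq_inner_sqrt hA]
  have huv : ⟪g (T z), g (S z)⟫_ℂ = sInner A (T (T z)) z := by
    rw [← sInner_eq_inner_sqrt hA, h.sInner_apply_right hA (T z) z]
  have hu : ‖g (T z)‖ ^ 2 = (sInner A (S (T z)) z).re := by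
    rw [h, ← sNorm_eq_norm_sqrt hA, sNorm_sq hA]
  have hv : ‖g (S z)‖ ^ 2 = (sInner A (T (S z)) z).re := by
    rw [h.sInner_apply_right hA, ← sNorm_eq_norm_sqrt hA, sNorm_sq hA]
  have hbuzano := norm_inner_mul_inner_le_of_norm_eq_one (𝕜 := ℂ) he (g (T z)) (g (S z))
  rw [hue, hev, huv, ← sq, norm_pow] at hbuzano
  have hamgm := two_mul_le_add_sq ‖g (T z)‖ ‖g (S z)‖
  rw [add_apply, sInner_add_left, Complex.add_re, comp_apply, comp_apply, comp_apply]
  linarith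

theorem numRad_sq_le (hA : A.IsPositive) (hT : ABounded A T) (h : IsAAdjoint A T S) :
    numRad A T ^ 2 ≤ 1 / 4 * opSNorm A (S ∘L T + T ∘L S) + 1 / 2 * numRad A (T ∘L T) := by
  have hS := hT.of_isAAdjoint hA h
  have hsum : ABounded A (S ∘L T + T ∘L S) := (hS.comp hT).add hA (hT.comp hS)
  set b := 1 / 4 * opSNorm A (S ∘L T + T ∘L S) + 1 / 2 * numRad A (T ∘L T) with hb_def
  have hb : 0 ≤ b := by
    have := opSNorm_nonneg A (S ∘L T + T ∘L S)
    have := numRad_nonneg A (T ∘L T)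
    positivity
  suffices numRad A T ≤ √b from (Real.le_sqrt (numRad_nonneg A T) hb).mp this
  refine Real.sSup_le (fun _ ⟨z, hz, hc⟩ => hc ▸ (Real.le_sqrt (norm_nonneg _) hb).mpr ?_)
    (Real.sqrt_nonneg b)
  have h1 := hsum.re_sInner_apply_le hA z
  have h2 := (hT.comp hT).norm_sInner_apply_le hA z
  rw [hz, one_pow, mul_one] at h1 h2
  linarith [norm_sInner_apply_sq_le hA h hz]

end SemiInnerProduct

section Blocks

variable {H : Type*} [NormedAddCommGroup H] [InnerProductSpace ℂ H] {A : H →L[ℂ] H}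

lemma blk_fst (T X Y S : H →L[ℂ] H) (z : WithLp 2 (H × H)) :
    (blk T X Y S z).fst = T z.fst + X z.snd := rfl

lemma blk_snd (T X Y S : H →L[ℂ] H) (z : WithLp 2 (H × H)) :
    (blk T X Y S z).snd = Y z.fst + S z.snd := rfl

lemma blk_ext {F G : WithLp 2 (H × H) →L[ℂ] WithLp 2 (H × H)}
    (hfst : ∀ z, (F z).fst = (G z).fst) (hsnd : ∀ z, (F z).snd = (G z).snd) : F = G :=
  ext fun z => WithLp.ofLp_injective 2 (Prod.ext (hfst z) (hsnd z))

lemma blk_comp (T X Y S T' X' Y' S' : H →L[ℂ] H) :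
    blk T X Y S ∘L blk T' X' Y' S' =
      blk (T ∘L T' + X ∘L Y') (T ∘L X' + X ∘L S') (Y ∘L T' + S ∘L Y') (Y ∘L X' + S ∘L S') := by
  refine blk_ext (fun z => ?_) (fun z => ?_) <;>
  · simp only [comp_apply, blk_fst, blk_snd, add_apply, map_add]
    abel

lemma blk_add (T X Y S T' X' Y' S' : H →L[ℂ] H) :
    blk T X Y S + blk T' X' Y' S' = blk (T + T') (X + X') (Y + Y') (S + S') := by
  refine blk_ext (fun z => ?_) (fun z => ?_) <;>
  · simp only [add_apply, WithLp.add_fst, WithLp.add_snd, blk_fst, blk_snd]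
    abel

lemma sInner_twoA (A : H →L[ℂ] H) (z w : WithLp 2 (H × H)) :
    sInner (twoA A) z w = sInner A z.fst w.fst + sInner A z.snd w.snd := by
  simp [sInner, twoA, WithLp.prod_inner_apply, blk_fst, blk_snd]

lemma IsAAdjoint.antidiagBlk {X Y Xs Ys : H →L[ℂ] H} (hX : IsAAdjoint A X Xs)
    (hY : IsAAdjoint A Y Ys) : IsAAdjoint (twoA A) (blk 0 X Y 0) (blk 0 Ys Xs 0) := by
  intro z w
  simp only [sInner_twoA, blk_fst, blk_snd, zero_apply, zero_add, add_zero]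
  rw [hX, hY, add_comm]

lemma twoA_isPositive (hA : A.IsPositive) : (twoA A).IsPositive := by
  rw [isPositive_iff_complex] at hA ⊢
  intro z
  obtain ⟨h₁, h₁'⟩ := hA z.fst
  obtain ⟨h₂, h₂'⟩ := hA z.snd
  have hz : ⟪twoA A z, z⟫_ℂ = ⟪A z.fst, z.fst⟫_ℂ + ⟪A z.snd, z.snd⟫_ℂ := sInner_twoA A z z
  rw [hz, map_add]
  push_cast
  exact ⟨by rw [h₁, h₂], add_nonneg h₁' h₂'⟩

variable [CompleteSpace H]

lemma sNorm_twoA_sq (hA : A.IsPositive) (z : WithLp 2 (H × H)) :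
    sNorm (twoA A) z ^ 2 = sNorm A z.fst ^ 2 + sNorm A z.snd ^ 2 := by
  rw [sNorm_sq (twoA_isPositive hA), sNorm_sq hA, sNorm_sq hA, sInner_twoA, Complex.add_re]

lemma ABounded.antidiagBlk (hA : A.IsPositive) {X Y : H →L[ℂ] H} (hX : ABounded A X)
    (hY : ABounded A Y) : ABounded (twoA A) (blk 0 X Y 0) := by
  obtain ⟨a, ha, hXa⟩ := hX
  obtain ⟨b, hb, hYb⟩ := hY
  refine ⟨a + b, add_pos ha hb, fun z => le_of_pow_le_pow_left₀ two_ne_zero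
    (by have := sNorm_nonneg (twoA A) z; positivity) ?_⟩
  have hXz := pow_le_pow_left₀ (sNorm_nonneg _ _) (hXa z.snd) 2
  have hYz := pow_le_pow_left₀ (sNorm_nonneg _ _) (hYb z.fst) 2
  have ha' : a ^ 2 ≤ (a + b) ^ 2 := pow_le_pow_left₀ ha.le (by linarith) 2
  have hb' : b ^ 2 ≤ (a + b) ^ 2 := pow_le_pow_left₀ hb.le (by linarith) 2
  rw [mul_pow, sNorm_twoA_sq hA, sNorm_twoA_sq hA, blk_fst, blk_snd]
  simp only [zero_apply, zero_add, add_zero]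
  nlinarith [sq_nonneg (sNorm A z.fst), sq_nonneg (sNorm A z.snd)]

lemma opSNorm_diagBlk_le (hA : A.IsPositive) {P Q : H →L[ℂ] H} (hP : ABounded A P)
    (hQ : ABounded A Q) :
    opSNorm (twoA A) (blk P 0 0 Q) ≤ max (opSNorm A P) (opSNorm A Q) := by
  set m := max (opSNorm A P) (opSNorm A Q)
  have hm : 0 ≤ m := le_max_of_le_left (opSNorm_nonneg A P)
  refine Real.sSup_le (fun _ ⟨z, hz, hc⟩ => hc ▸ le_of_pow_le_pow_left₀ two_ne_zero hm ?_) hm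
  have hz' := sNorm_twoA_sq hA z
  rw [hz, one_pow] at hz'
  have hPz := pow_le_pow_left₀ (sNorm_nonneg _ _) (hP.sNorm_apply_le z.fst) 2
  have hQz := pow_le_pow_left₀ (sNorm_nonneg _ _) (hQ.sNorm_apply_le z.snd) 2
  have hPm : opSNorm A P ^ 2 ≤ m ^ 2 :=
    pow_le_pow_left₀ (opSNorm_nonneg A P) (le_max_left _ _) 2
  have hQm : opSNorm A Q ^ 2 ≤ m ^ 2 :=
    pow_le_pow_left₀ (opSNorm_nonneg A Q) (le_max_right _ _) 2
  rw [sNorm_twoA_sq hA, blk_fst, blk_snd]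
  simp only [zero_apply, zero_add, add_zero]
  nlinarith [sq_nonneg (sNorm A z.fst), sq_nonneg (sNorm A z.snd)]

lemma numRad_diagBlk_le (hA : A.IsPositive) {P Q : H →L[ℂ] H} (hP : ABounded A P)
    (hQ : ABounded A Q) :
    numRad (twoA A) (blk P 0 0 Q) ≤ max (numRad A P) (numRad A Q) := by
  set m := max (numRad A P) (numRad A Q)
  have hm : 0 ≤ m := le_max_of_le_left (numRad_nonneg A P)
  refine Real.sSup_le (fun _ ⟨z, hz, hc⟩ => hc ▸ ?_) hm
  have hz' := sNorm_twoA_sq hA z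
  rw [hz, one_pow] at hz'
  rw [sInner_twoA, blk_fst, blk_snd]
  simp only [zero_apply, zero_add, add_zero]
  calc ‖sInner A (P z.fst) z.fst + sInner A (Q z.snd) z.snd‖
      ≤ numRad A P * sNorm A z.fst ^ 2 + numRad A Q * sNorm A z.snd ^ 2 :=
        (norm_add_le _ _).trans
          (add_le_add (hP.norm_sInner_apply_le hA _) (hQ.norm_sInner_apply_le hA _))
    _ ≤ m * sNorm A z.fst ^ 2 + m * sNorm A z.snd ^ 2 := by gcongr <;> simp [m]
    _ = m := by rw [← mul_add, ← hz', mul_one]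

end Blocks

theorem stmt1 {H : Type*} [NormedAddCommGroup H] [InnerProductSpace ℂ H] [CompleteSpace H]
    (A : H →L[ℂ] H) (hA : A.IsPositive)
    (X Y Xs Ys : H →L[ℂ] H) (hX : ABounded A X) (hY : ABounded A Y)
    (hXs : A.comp Xs = (ContinuousLinearMap.adjoint X).comp A)
    (hYs : A.comp Ys = (ContinuousLinearMap.adjoint Y).comp A) :
    (numRad (twoA A) (blk 0 X Y 0)) ^ 2 ≤
      (1 / 4) * max (opSNorm A (Xs.comp X + Y.comp Ys)) (opSNorm A (X.comp Xs + Ys.comp Y)) +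
        (1 / 2) * max (numRad A (X.comp Y)) (numRad A (Y.comp X)) := by
  have hXXs := isAAdjoint_of_comp_eq_adjoint_comp hXs
  have hYYs := isAAdjoint_of_comp_eq_adjoint_comp hYs
  have hXsb := hX.of_isAAdjoint hA hXXs
  have hYsb := hY.of_isAAdjoint hA hYYs
  have hsum : blk 0 Ys Xs 0 ∘L blk 0 X Y 0 + blk 0 X Y 0 ∘L blk 0 Ys Xs 0 =
      blk (X ∘L Xs + Ys ∘L Y) 0 0 (Xs ∘L X + Y ∘L Ys) := by
    simp only [blk_comp, blk_add, comp_zero, zero_comp, add_zero, zero_add]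
    rw [add_comm (Ys ∘L Y)]
  have hsq : blk 0 X Y 0 ∘L blk 0 X Y 0 = blk (X ∘L Y) 0 0 (Y ∘L X) := by
    simp only [blk_comp, comp_zero, zero_comp, add_zero, zero_add]
  calc numRad (twoA A) (blk 0 X Y 0) ^ 2
      ≤ 1 / 4 * opSNorm (twoA A) (blk (X ∘L Xs + Ys ∘L Y) 0 0 (Xs ∘L X + Y ∘L Ys)) +
          1 / 2 * numRad (twoA A) (blk (X ∘L Y) 0 0 (Y ∘L X)) := by
        rw [← hsum, ← hsq]
        exact numRad_sq_le (twoA_isPositive hA) (hX.antidiagBlk hA hY) (hXXs.antidiagBlk hYYs)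
    _ ≤ _ := by
        rw [max_comm (opSNorm A _)]
        gcongr
        · exact opSNorm_diagBlk_le hA ((hX.comp hXsb).add hA (hYsb.comp hY))
            ((hXsb.comp hX).add hA (hY.comp hYsb))
        · exact numRad_diagBlk_le hA (hX.comp hY) (hY.comp hX)
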